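/- For every word w over {a,b}, |w| ≥ K_w + R_w; moreover, |w| = K_w + R_w if and only if |w| = H_w + L_w. -/

import Mathlib

/-- The two-letter alphabet {a, b}. -/
inductive AB : Type
  | a : AB
  | b : AB
deriving DecidableEq, Repr

/-- A (finite) word over {a, b}. -/
abbrev Word := List AB

open AB

/-- `u` occurs in `w` at position `i`. -/
def OccursAt (u w : Word) (i : ℕ) : Prop :=
  i + u.length ≤ w.length ∧ (w.drop i).take u.length = u

/-- `u` occurs exactly once in `w` (is unrepeated in `w`). -/
def OccursOnce (u w : Word) : Prop := ∃! i, OccursAt u w i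

/-- `u` is a right special factor of `w`: both `ua` and `ub` are factors of `w`. -/
def IsRightSpecial (u w : Word) : Prop := (u ++ [a]) <:+: w ∧ (u ++ [b]) <:+: w

/-- `u` is a left special factor of `w`: both `au` and `bu` are factors of `w`. -/
def IsLeftSpecial (u w : Word) : Prop := ([a] ++ u) <:+: w ∧ ([b] ++ u) <:+: w

/-- `K w`: the length of the shortest unrepeated suffix of `w`. -/
noncomputable def Kp (w : Word) : ℕ := sInf {n | ∃ s : Word, s <:+ w ∧ s.length = n ∧ OccursOnce s w}

/-- `H w`: the length of the shortest unrepeated prefix of `w`. -/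
noncomputable def Hp (w : Word) : ℕ := sInf {n | ∃ p : Word, p <+: w ∧ p.length = n ∧ OccursOnce p w}

/-- `R w`: the smallest `n ≥ 0` such that `w` has no right special factor of length `n`. -/
noncomputable def Rp (w : Word) : ℕ := sInf {n | ∀ u : Word, u.length = n → ¬ IsRightSpecial u w}

/-- `L w`: the smallest `n ≥ 0` such that `w` has no left special factor of length `n`. -/
noncomputable def Lp (w : Word) : ℕ := sInf {n | ∀ u : Word, u.length = n → ¬ IsLeftSpecial u w}

/-- A word `w` is trapezoidal if `|w| = K w + R w`. -/
def IsTrapezoidal (w : Word) : Prop := w.length = Kp w + Rp w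

/-- A finite word over `{a,b}` is Sturmian iff it is balanced: there is no word `u`
with both `aua` and `bub` factors of `w`. -/
def IsSturmian (w : Word) : Prop :=
  ¬ ∃ u : Word, ([a] ++ u ++ [a]) <:+: w ∧ ([b] ++ u ++ [b]) <:+: w

/-- A nonempty word is closed if it has a border (a proper prefix which is also a suffix)
whose only occurrences in `w` are as a prefix and as a suffix. -/
def IsClosedWord (w : Word) : Prop :=
  w ≠ [] ∧ ∃ v : Word, v <+: w ∧ v.length < w.length ∧ v <:+ w ∧
    ∀ i : ℕ, OccursAt v w i → i = 0 ∨ i + v.length = w.length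

/-- A nonempty word is open if it is not closed. -/
def IsOpenWord (w : Word) : Prop := w ≠ [] ∧ ¬ IsClosedWord w

/-- Central words: `a^n`, `b^n`, or `u a b v = v b a u`. -/
def IsCentral (w : Word) : Prop :=
  (∃ n : ℕ, w = List.replicate n a) ∨ (∃ n : ℕ, w = List.replicate n b) ∨
  (∃ u v : Word, w = u ++ [a, b] ++ v ∧ w = v ++ [b, a] ++ u)

/-- The minimal period of `w`: `|w|` minus the length of the longest border of `w`. -/
noncomputable def minPeriod (w : Word) : ℕ :=
  w.length - sSup {n | ∃ v : Word, v.length = n ∧ v <+: w ∧ v ≠ w ∧ v <:+ w}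


/-!
Every factor of `w` has zero, one or two right extensions, so counting the edges of the tree
of factors (whose parent map is `List.dropLast`) shows that the factors with no right extension
outnumber the right special ones by exactly one. A factor has no right extension iff it is a
suffix occurring only once, i.e. a suffix of length at least `K w`; hence `w` has exactly
`|w| - K w` right special factors. Right special factors are closed under suffixes, so there is
one of each length `< R w` and none longer: `|w| ≥ K w + R w`, with equality iff no two right
special factors have the same length. This condition is equivalent to the same one for left
special factors, and reversing `w` exchanges `(K, R)` with `(H, L)`.
-/

open Finset

theorem List.exists_append_cons_of_length_eq_of_ne {α : Type*} :
    ∀ {u v : List α}, u.length = v.length → u ≠ v →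
      ∃ p x y s t, x ≠ y ∧ u = p ++ x :: s ∧ v = p ++ y :: t
  | [], [], _, hne => absurd rfl hne
  | x :: u, y :: v, hlen, hne => by
    by_cases hxy : x = y
    · subst hxy
      obtain ⟨p, x', y', s, t, hxy', rfl, rfl⟩ :=
        exists_append_cons_of_length_eq_of_ne (by simpa using hlen) (by simpa using hne)
      exact ⟨x :: p, x', y', s, t, hxy', rfl, rfl⟩
    · exact ⟨[], x, y, u, v, hxy, rfl, rfl⟩

def IsRightExtendable (u w : Word) : Prop := (u ++ [a]) <:+: w ∨ (u ++ [b]) <:+: w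

def IsLeftExtendable (u w : Word) : Prop := ([a] ++ u) <:+: w ∨ ([b] ++ u) <:+: w

def HasUniqueRightSpecials (w : Word) : Prop :=
  ∀ u v : Word, u.length = v.length → IsRightSpecial u w → IsRightSpecial v w → u = v

def HasUniqueLeftSpecials (w : Word) : Prop :=
  ∀ u v : Word, u.length = v.length → IsLeftSpecial u w → IsLeftSpecial v w → u = v

instance (u w : Word) : Decidable (IsRightSpecial u w) := inferInstanceAs (Decidable (_ ∧ _))

instance (u w : Word) : Decidable (IsRightExtendable u w) := inferInstanceAs (Decidable (_ ∨ _))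

section Occurrences

variable {u w : Word}

theorem occursAt_iff {i : ℕ} : OccursAt u w i ↔ ∃ s t, w = s ++ u ++ t ∧ s.length = i := by
  constructor
  · rintro ⟨hle, htake⟩
    refine ⟨w.take i, w.drop (i + u.length), ?_, by rw [List.length_take]; omega⟩
    conv_lhs => rw [← List.take_append_drop i w, ← List.take_append_drop u.length (w.drop i)]
    rw [htake, List.drop_drop, List.append_assoc]
  · rintro ⟨s, t, rfl, rfl⟩
    simp [OccursAt]

theorem isRightExtendable_iff : IsRightExtendable u w ↔ ∃ c, (u ++ [c]) <:+: w := by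
  constructor
  · rintro (h | h) <;> exact ⟨_, h⟩
  · rintro ⟨_ | _, h⟩
    exacts [Or.inl h, Or.inr h]

theorem isLeftExtendable_iff : IsLeftExtendable u w ↔ ∃ c, ([c] ++ u) <:+: w := by
  constructor
  · rintro (h | h) <;> exact ⟨_, h⟩
  · rintro ⟨_ | _, h⟩
    exacts [Or.inl h, Or.inr h]

theorem not_isRightExtendable_self : ¬ IsRightExtendable w w := by
  rintro (h | h) <;> simpa using h.length_le

theorem occursOnce_iff_not_isRightExtendable (hs : u <:+ w) :
    OccursOnce u w ↔ ¬ IsRightExtendable u w := by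
  obtain ⟨p, rfl⟩ := hs
  simp only [OccursOnce, occursAt_iff, isRightExtendable_iff]
  constructor
  · rintro ⟨i, -, huniq⟩ ⟨c, x, y, hxy⟩
    have h1 := huniq p.length ⟨p, [], by simp, rfl⟩
    have h2 := huniq x.length ⟨x, c :: y, by simp [← hxy], rfl⟩
    have := congrArg List.length hxy
    simp only [List.append_assoc, List.length_append, List.length_cons, List.length_nil] at this
    omega
  · intro hne
    refine ⟨p.length, ⟨p, [], by simp, rfl⟩, ?_⟩
    rintro j ⟨x, t, hxt, rfl⟩
    cases t with
    | nil =>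
      have := congrArg List.length hxt
      simp only [List.length_append, List.length_nil] at this
      omega
    | cons c t => exact absurd ⟨c, x, t, by simp [hxt]⟩ hne

theorem occursOnce_iff_not_isLeftExtendable (hp : u <+: w) :
    OccursOnce u w ↔ ¬ IsLeftExtendable u w := by
  obtain ⟨t, rfl⟩ := hp
  simp only [OccursOnce, occursAt_iff, isLeftExtendable_iff]
  constructor
  · rintro ⟨i, -, huniq⟩ ⟨c, x, y, hxy⟩
    have h1 := huniq 0 ⟨[], t, by simp, rfl⟩
    have h2 := huniq (x ++ [c]).length ⟨x ++ [c], y, by simp [← hxy], rfl⟩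
    simp only [List.length_append, List.length_singleton] at h2
    omega
  · intro hne
    refine ⟨0, ⟨[], t, by simp, rfl⟩, ?_⟩
    rintro j ⟨x, y, hxy, rfl⟩
    rcases List.eq_nil_or_concat x with rfl | ⟨x, c, rfl⟩
    · rfl
    · exact absurd ⟨c, x, y, by simp [hxy]⟩ hne

theorem List.IsInfix.isSuffix_of_not_isRightExtendable (hu : u <:+: w) (hne : ¬ IsRightExtendable u w) :
    u <:+ w := by
  obtain ⟨s, t, rfl⟩ := hu
  cases t with
  | nil => exact ⟨s, by simp⟩
  | cons c t => exact absurd (isRightExtendable_iff.2 ⟨c, s, t, by simp⟩) hne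

end Occurrences

theorem IsRightExtendable.of_suffix {t u w : Word} (h : IsRightExtendable u w) (ht : t <:+ u) :
    IsRightExtendable t w :=
  h.imp (List.suffix_append_self_iff.2 ht).isInfix.trans
    (List.suffix_append_self_iff.2 ht).isInfix.trans

theorem IsRightSpecial.of_suffix {t u w : Word} (h : IsRightSpecial u w) (ht : t <:+ u) :
    IsRightSpecial t w :=
  ⟨(List.suffix_append_self_iff.2 ht).isInfix.trans h.1,
    (List.suffix_append_self_iff.2 ht).isInfix.trans h.2⟩

theorem IsLeftSpecial.of_prefix {p u w : Word} (h : IsLeftSpecial u w) (hp : p <+: u) :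
    IsLeftSpecial p w :=
  ⟨((List.prefix_append_right_inj _).2 hp).isInfix.trans h.1,
    ((List.prefix_append_right_inj _).2 hp).isInfix.trans h.2⟩

theorem isRightSpecial_of_ne {u w : Word} {x y : AB} (hxy : x ≠ y) (hx : (u ++ [x]) <:+: w)
    (hy : (u ++ [y]) <:+: w) : IsRightSpecial u w := by
  cases x <;> cases y
  exacts [absurd rfl hxy, ⟨hx, hy⟩, ⟨hy, hx⟩, absurd rfl hxy]

section Reverse

variable {u w : Word}

theorem append_singleton_infix_reverse_iff {c : AB} :
    (u.reverse ++ [c]) <:+: w.reverse ↔ ([c] ++ u) <:+: w := by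
  rw [show u.reverse ++ [c] = ([c] ++ u).reverse by simp, List.reverse_infix]

theorem isRightExtendable_reverse_iff :
    IsRightExtendable u.reverse w.reverse ↔ IsLeftExtendable u w := by
  simp only [IsRightExtendable, IsLeftExtendable, append_singleton_infix_reverse_iff]

theorem isRightSpecial_reverse_iff : IsRightSpecial u.reverse w.reverse ↔ IsLeftSpecial u w := by
  simp only [IsRightSpecial, IsLeftSpecial, append_singleton_infix_reverse_iff]

theorem hasUniqueRightSpecials_reverse_iff :
    HasUniqueRightSpecials w.reverse ↔ HasUniqueLeftSpecials w := by
  unfold HasUniqueRightSpecials HasUniqueLeftSpecials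
  rw [List.reverse_surjective.forall]
  refine forall_congr' fun u => ?_
  rw [List.reverse_surjective.forall]
  simp only [List.length_reverse, isRightSpecial_reverse_iff, List.reverse_inj]

theorem Kp_reverse : Kp w.reverse = Hp w := by
  unfold Kp Hp
  congr 1
  ext n
  simp only [Set.mem_ofPred_eq]
  rw [List.reverse_surjective.exists]
  refine exists_congr fun p => ?_
  rw [List.reverse_suffix, List.length_reverse]
  refine and_congr_right fun hp => and_congr_right fun _ => ?_
  rw [occursOnce_iff_not_isRightExtendable (List.reverse_suffix.2 hp),
    occursOnce_iff_not_isLeftExtendable hp, isRightExtendable_reverse_iff]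

theorem Rp_reverse : Rp w.reverse = Lp w := by
  unfold Rp Lp
  congr 1
  ext n
  simp only [Set.mem_ofPred_eq]
  rw [List.reverse_surjective.forall]
  simp only [List.length_reverse, isRightSpecial_reverse_iff]

end Reverse

section Counting

variable (w : Word)

theorem Kp_le_length_iff {s : Word} (hs : s <:+ w) :
    Kp w ≤ s.length ↔ ¬ IsRightExtendable s w := by
  constructor
  · intro hK hext
    obtain ⟨t, ht, htK, hto⟩ := Nat.sInf_mem (⟨w.length, w, List.suffix_refl w, rfl,
      (occursOnce_iff_not_isRightExtendable (List.suffix_refl w)).2 not_isRightExtendable_self⟩ :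
      {n | ∃ s : Word, s <:+ w ∧ s.length = n ∧ OccursOnce s w}.Nonempty)
    have hts : t <:+ s := List.suffix_of_suffix_length_le ht hs (htK.trans_le hK)
    exact (occursOnce_iff_not_isRightExtendable ht).1 hto (hext.of_suffix hts)
  · intro h
    exact Nat.sInf_le ⟨s, hs, rfl, (occursOnce_iff_not_isRightExtendable hs).2 h⟩

theorem Kp_le_length : Kp w ≤ w.length :=
  (Kp_le_length_iff w (List.suffix_refl w)).2 not_isRightExtendable_self

def factors : Finset Word := (w.tails.flatMap List.inits).toFinset

variable {w} in
@[simp]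
theorem mem_factors {u : Word} : u ∈ factors w ↔ u <:+: w := by
  simp [factors, List.infix_iff_prefix_suffix, and_comm]

def rightSpecialFactors : Finset Word := (factors w).filter (IsRightSpecial · w)

variable {w} in
@[simp]
theorem mem_rightSpecialFactors {u : Word} :
    u ∈ rightSpecialFactors w ↔ IsRightSpecial u w := by
  rw [rightSpecialFactors, mem_filter, mem_factors, and_iff_right_iff_imp]
  exact fun h => (List.prefix_append u [a]).isInfix.trans h.1

def rightExtensions (u : Word) : Finset AB := ({a, b} : Finset AB).filter (fun c => (u ++ [c]) <:+: w)

/-- Removing the last letter maps the nonempty factors bijectively onto the pairs `(u, c)` such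
that `u ++ [c]` is a factor. -/
theorem card_factors_eq : #(factors w) = 1 + ∑ u ∈ factors w, #(rightExtensions w u) := by
  have hnil : [] ∈ factors w := by simp
  have hedges : #((factors w).erase []) =
      #((factors w ×ˢ ({a, b} : Finset AB)).filter (fun p => (p.1 ++ [p.2]) <:+: w)) := by
    refine card_nbij' (fun u => (u.dropLast, u.getLast?.getD a)) (fun p => p.1 ++ [p.2])
      ?_ ?_ ?_ ?_
    · intro u hu
      simp only [coe_erase, Set.mem_sdiff, mem_coe, mem_factors, Set.mem_singleton_iff] at hu
      obtain ⟨hu, hne⟩ := hu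
      rcases List.eq_nil_or_concat u with rfl | ⟨u, c, rfl⟩
      · exact absurd rfl hne
      · rw [List.concat_eq_append] at hu
        have hu' := (List.prefix_append u [c]).isInfix.trans hu
        cases c <;> simp [hu, hu']
    · rintro ⟨u, c⟩ hu
      simp only [coe_filter, mem_product, mem_factors, Set.mem_ofPred_eq] at hu
      simp [hu.2]
    · intro u hu
      simp only [coe_erase, Set.mem_sdiff, mem_coe, mem_factors, Set.mem_singleton_iff] at hu
      rcases List.eq_nil_or_concat u with rfl | ⟨u, c, rfl⟩
      · exact absurd rfl hu.2
      · simp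
    · rintro ⟨u, c⟩ -
      simp
  rw [← card_erase_add_one hnil, hedges, card_filter, sum_product]
  simp only [rightExtensions, card_filter]
  omega

theorem card_rightExtensions_add_ite (u : Word) :
    #(rightExtensions w u) + (if ¬ IsRightExtendable u w then 1 else 0) =
      1 + (if IsRightSpecial u w then 1 else 0) := by
  by_cases ha : (u ++ [a]) <:+: w <;> by_cases hb : (u ++ [b]) <:+: w <;>
    simp [rightExtensions, IsRightExtendable, IsRightSpecial, filter_insert, filter_singleton,
      ha, hb]

theorem card_rightSpecialFactors_add_one :
    #(rightSpecialFactors w) + 1 = #((factors w).filter (¬ IsRightExtendable · w)) := by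
  have hsum := sum_congr rfl fun u (_ : u ∈ factors w) => card_rightExtensions_add_ite w u
  rw [sum_add_distrib, sum_add_distrib, ← card_filter, ← card_filter, sum_const, smul_eq_mul,
    mul_one] at hsum
  have := card_factors_eq w
  rw [rightSpecialFactors]
  omega

theorem card_filter_not_isRightExtendable :
    #((factors w).filter (¬ IsRightExtendable · w)) = w.length + 1 - Kp w := by
  have hsuffix : ∀ u ∈ (factors w).filter (¬ IsRightExtendable · w), u <:+ w := fun u hu => by
    rw [mem_filter, mem_factors] at hu
    exact hu.1.isSuffix_of_not_isRightExtendable hu.2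
  have hinj : Set.InjOn List.length ((factors w).filter (¬ IsRightExtendable · w)) :=
    fun u hu v hv huv => ((List.suffix_of_suffix_length_le (hsuffix u hu) (hsuffix v hv)
      huv.le).eq_of_length huv)
  rw [← card_image_of_injOn hinj, ← Nat.card_Icc]
  congr 1
  ext n
  simp only [mem_image, mem_filter, mem_factors, mem_Icc]
  constructor
  · rintro ⟨u, hu, rfl⟩
    exact ⟨(Kp_le_length_iff w (hsuffix u (by simpa using hu))).2 hu.2, hu.1.length_le⟩
  · rintro ⟨hK, hn⟩
    have hlen : (w.drop (w.length - n)).length = n := by rw [List.length_drop]; omega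
    refine ⟨w.drop (w.length - n), ⟨(List.drop_suffix _ _).isInfix, ?_⟩, hlen⟩
    exact (Kp_le_length_iff w (List.drop_suffix _ _)).1 (hlen.symm ▸ hK)

theorem card_rightSpecialFactors : #(rightSpecialFactors w) = w.length - Kp w := by
  have := card_rightSpecialFactors_add_one w
  rw [card_filter_not_isRightExtendable] at this
  have := Kp_le_length w
  omega

end Counting

section RightSpecial

variable {w : Word}

theorem not_isRightSpecial_of_Rp_le {u : Word} (h : Rp w ≤ u.length) : ¬ IsRightSpecial u w := by
  intro hu
  have hRp := Nat.sInf_mem (⟨w.length, fun v hv hrs => by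
    have := hrs.1.length_le
    simp only [List.length_append, List.length_singleton] at this
    omega⟩ : {n | ∀ u : Word, u.length = n → ¬ IsRightSpecial u w}.Nonempty)
  exact hRp (u.drop (u.length - Rp w)) (by rw [List.length_drop]; omega : _ = Rp w)
    (hu.of_suffix (List.drop_suffix _ _))

theorem exists_isRightSpecial_of_lt_Rp {n : ℕ} (h : n < Rp w) :
    ∃ u : Word, u.length = n ∧ IsRightSpecial u w := by
  simpa using Nat.notMem_of_lt_sInf h

theorem one_le_card_rightSpecialFactors_length {n : ℕ} (h : n < Rp w) :
    1 ≤ #((rightSpecialFactors w).filter (·.length = n)) := by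
  obtain ⟨u, hu, hrs⟩ := exists_isRightSpecial_of_lt_Rp h
  exact card_pos.2 ⟨u, by simp [hu, hrs]⟩

theorem card_rightSpecialFactors_eq_sum :
    #(rightSpecialFactors w) =
      ∑ n ∈ range (Rp w), #((rightSpecialFactors w).filter (·.length = n)) :=
  card_eq_sum_card_fiberwise fun _ hu => mem_range.2 (lt_of_not_ge fun h =>
    not_isRightSpecial_of_Rp_le h (mem_rightSpecialFactors.1 hu))

theorem Rp_le_card_rightSpecialFactors : Rp w ≤ #(rightSpecialFactors w) := by
  rw [card_rightSpecialFactors_eq_sum]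
  calc Rp w = ∑ _n ∈ range (Rp w), 1 := by simp
    _ ≤ _ := sum_le_sum fun n hn => one_le_card_rightSpecialFactors_length (mem_range.1 hn)

theorem card_rightSpecialFactors_eq_Rp_iff :
    #(rightSpecialFactors w) = Rp w ↔ HasUniqueRightSpecials w := by
  rw [card_rightSpecialFactors_eq_sum]
  conv_lhs => rhs; rw [← card_range (Rp w), card_eq_sum_ones]
  rw [eq_comm, sum_eq_sum_iff_of_le fun n hn =>
    one_le_card_rightSpecialFactors_length (mem_range.1 hn)]
  constructor
  · intro h u v huv hu hv
    have hlt : u.length < Rp w := lt_of_not_ge fun h => not_isRightSpecial_of_Rp_le h hu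
    exact card_le_one.1 (h u.length (mem_range.2 hlt)).ge u (by simp [hu]) v (by simp [hv, huv])
  · intro h n hn
    refine (le_antisymm ?_ (one_le_card_rightSpecialFactors_length (mem_range.1 hn))).symm
    refine card_le_one.2 fun u hu v hv => ?_
    simp only [mem_filter, mem_rightSpecialFactors] at hu hv
    exact h u v (hu.2.trans hv.2.symm) hu.1 hv.1

end RightSpecial

theorem Kp_add_Rp_le_length (w : Word) : Kp w + Rp w ≤ w.length := by
  have := card_rightSpecialFactors w
  have := Kp_le_length w
  have := Rp_le_card_rightSpecialFactors (w := w)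
  omega

theorem isTrapezoidal_iff_hasUniqueRightSpecials (w : Word) :
    IsTrapezoidal w ↔ HasUniqueRightSpecials w := by
  rw [← card_rightSpecialFactors_eq_Rp_iff, IsTrapezoidal, card_rightSpecialFactors]
  have := Kp_add_Rp_le_length w
  omega

/-- If two left special factors of the same length first differ after their common prefix `p`,
then `a p` and `b p` are two right special factors of the same length. -/
theorem HasUniqueRightSpecials.hasUniqueLeftSpecials {w : Word} (h : HasUniqueRightSpecials w) :
    HasUniqueLeftSpecials w := by
  intro u v hlen hu hv
  by_contra hne
  obtain ⟨p, x, y, s, t, hxy, rfl, rfl⟩ := List.exists_append_cons_of_length_eq_of_ne hlen hne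
  have hpx := hu.of_prefix (⟨s, by simp⟩ : p ++ [x] <+: p ++ x :: s)
  have hpy := hv.of_prefix (⟨t, by simp⟩ : p ++ [y] <+: p ++ y :: t)
  have hrs (c : AB) (hcx : ([c] ++ (p ++ [x])) <:+: w) (hcy : ([c] ++ (p ++ [y])) <:+: w) :
      IsRightSpecial ([c] ++ p) w :=
    isRightSpecial_of_ne hxy (by simpa using hcx) (by simpa using hcy)
  simpa using h ([a] ++ p) ([b] ++ p) rfl (hrs a hpx.1 hpy.1) (hrs b hpx.2 hpy.2)

theorem hasUniqueRightSpecials_iff_hasUniqueLeftSpecials {w : Word} :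
    HasUniqueRightSpecials w ↔ HasUniqueLeftSpecials w := by
  refine ⟨HasUniqueRightSpecials.hasUniqueLeftSpecials, fun h => ?_⟩
  have := (hasUniqueRightSpecials_reverse_iff.2 h).hasUniqueLeftSpecials
  rwa [← hasUniqueRightSpecials_reverse_iff, List.reverse_reverse] at this

/-- `|w| ≥ K w + R w` always, and `|w| = K w + R w ↔ |w| = H w + L w`. -/
theorem length_ge_K_add_R_and_trapezoidal_iff (w : Word) :
    Kp w + Rp w ≤ w.length ∧ (w.length = Kp w + Rp w ↔ w.length = Hp w + Lp w) := by
  refine ⟨Kp_add_Rp_le_length w, ?_⟩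
  have hrev : IsTrapezoidal w.reverse ↔ w.length = Hp w + Lp w := by
    rw [IsTrapezoidal, List.length_reverse, Kp_reverse, Rp_reverse]
  change IsTrapezoidal w ↔ _
  rw [← hrev, isTrapezoidal_iff_hasUniqueRightSpecials, isTrapezoidal_iff_hasUniqueRightSpecials,
    hasUniqueRightSpecials_reverse_iff, hasUniqueRightSpecials_iff_hasUniqueLeftSpecials]
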